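/- Let A be an affinity on the finite set X = {1,…,n} and G_A the simple graph with edges {{i,j} : i ≠ j, A(i,j) = +∞}. Then the number of connected components of the topological space (X, τ_A) equals the number of path connected components of the graph G_A. -/
import Mathlib


open scoped ENNReal NNReal

/-- The topology induced by an affinity: U is open iff every x ∈ U has a basic
neighborhood E(x,α) = {y : A(x,y) > α}, α > 0, contained in U. -/
def affTop {X : Type*} (A : X → X → ℝ≥0∞) : TopologicalSpace X where
  IsOpen U := ∀ x ∈ U, ∃ α : ℝ≥0, 0 < α ∧ {y | (α : ℝ≥0∞) < A x y} ⊆ U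
  isOpen_univ := fun _ _ => ⟨1, one_pos, Set.subset_univ _⟩
  isOpen_inter := by
    intro U V hU hV x hx
    obtain ⟨a, ha, haU⟩ := hU x hx.1
    obtain ⟨b, _, hbV⟩ := hV x hx.2
    exact ⟨max a b, lt_max_of_lt_left ha, fun y hy =>
      ⟨haU (lt_of_le_of_lt (ENNReal.coe_le_coe.mpr (le_max_left a b)) hy),
       hbV (lt_of_le_of_lt (ENNReal.coe_le_coe.mpr (le_max_right a b)) hy)⟩⟩
  isOpen_sUnion := by
    intro S hS x hx
    obtain ⟨U, hU, hxU⟩ := hx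
    obtain ⟨a, ha, haU⟩ := hS U hU x hxU
    exact ⟨a, ha, haU.trans (Set.subset_sUnion_of_mem hU)⟩

/-- The simple graph G_A associated to an affinity: i and j are adjacent iff
i ≠ j and A(i,j) = +∞. -/
def affGraph {n : ℕ} (A : Fin n → Fin n → ℝ≥0∞) : SimpleGraph (Fin n) :=
  SimpleGraph.fromRel (fun i j => A i j = ⊤)

section Aux
open scoped ENNReal NNReal

variable {n : ℕ} (A : Fin n → Fin n → ℝ≥0∞)

private lemma aff_exists_alpha (z : Fin n) :
    ∃ α : ℝ≥0, 0 < α ∧ ∀ w, (α : ℝ≥0∞) < A z w → A z w = ⊤ := by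
  refine ⟨(Finset.univ.sup fun w => (A z w).toNNReal) + 1, by positivity, fun w hw => ?_⟩
  by_contra h
  have h1 : A z w = ((A z w).toNNReal : ℝ≥0∞) := (ENNReal.coe_toNNReal h).symm
  have h2 : (A z w).toNNReal ≤ Finset.univ.sup fun v => (A z v).toNNReal :=
    Finset.le_sup (f := fun v => (A z v).toNNReal) (Finset.mem_univ w)
  have : A z w ≤ (((Finset.univ.sup fun v => (A z v).toNNReal) + 1 : ℝ≥0) : ℝ≥0∞) := by
    rw [h1]
    exact_mod_cast h2.trans (le_add_of_nonneg_right zero_le_one)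
  exact absurd (hw.trans_le this) (lt_irrefl _)

private lemma aff_component_iff (hsymm : ∀ i j, A i j = A j i) (hdiag : ∀ i, A i i = ⊤)
    (x y : Fin n) :
    @connectedComponent (Fin n) (affTop A) x = @connectedComponent (Fin n) (affTop A) y ↔
      (affGraph A).Reachable x y := by
  letI : TopologicalSpace (Fin n) := affTop A
  constructor
  · intro h
    -- reachability class of x is clopen
    have hopen : ∀ z : Fin n, IsOpen {w | (affGraph A).Reachable z w} := by
      intro z w hw
      obtain ⟨α, hα, hαtop⟩ := aff_exists_alpha A w
      refine ⟨α, hα, fun v hv => ?_⟩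
      have htop := hαtop v hv
      rcases eq_or_ne w v with rfl | hne
      · exact hw
      · exact hw.trans (SimpleGraph.Adj.reachable ⟨hne, Or.inl htop⟩)
    have hclopen : IsClopen {w | (affGraph A).Reachable x w} := by
      constructor
      · rw [← isOpen_compl_iff]
        intro w hw
        obtain ⟨α, hα, hαtop⟩ := aff_exists_alpha A w
        refine ⟨α, hα, fun v hv hvmem => ?_⟩
        have htop := hαtop v hv
        apply hw
        rcases eq_or_ne w v with rfl | hne
        · exact hvmem
        · exact hvmem.trans (SimpleGraph.Adj.reachable
            (show (affGraph A).Adj v w from ⟨hne.symm, Or.inr htop⟩))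
      · exact hopen x
    have hy : y ∈ connectedComponent x := by
      rw [h]; exact mem_connectedComponent
    exact hclopen.connectedComponent_subset (SimpleGraph.Reachable.refl x) hy
  · intro h
    obtain ⟨p⟩ := h
    induction p with
    | nil => rfl
    | @cons a b c hab _ ih =>
      refine Eq.trans ?_ ih
      -- a ∈ closure {b}
      have hab' : A a b = ⊤ := by
        rcases hab.2 with h | h
        · exact h
        · rw [hsymm]; exact h
      have hcl : a ∈ closure {b} := by
        rw [mem_closure_iff]
        intro U hU haU
        obtain ⟨α, hα, hsub⟩ := hU a haU
        refine ⟨b, hsub ?_, rfl⟩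
        show (α : ℝ≥0∞) < A a b
        rw [hab']
        exact ENNReal.coe_lt_top
      have h1 : a ∈ connectedComponent b :=
        (isClosed_connectedComponent.closure_subset_iff.mpr
          (Set.singleton_subset_iff.mpr mem_connectedComponent)) hcl
      exact (connectedComponent_eq h1).symm

end Aux

/-- the number of connected components of (X, τ_A) equals the
number of path connected components of the graph G_A. -/
theorem card_components_eq {n : ℕ} (A : Fin n → Fin n → ℝ≥0∞)
    (hpos : ∀ i j, 0 < A i j)
    (hsymm : ∀ i j, A i j = A j i)
    (hdiag : ∀ i, A i i = ⊤) :
    Nat.card (@ConnectedComponents (Fin n) (affTop A)) =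
      Nat.card ((affGraph A).ConnectedComponent) := by
  exact Nat.card_congr (Quot.congrRight (aff_component_iff A hsymm hdiag))
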